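/- Let R be a semiprime ring with finitely many minimal primes and whose centre Z(R) also has finitely many minimal primes. Then the following statements are equivalent: (1) C_{Z(R)} ⊆ C_R; (2) C_{Z(R)} ∩ 𝔭 = ∅ for all 𝔭 ∈ min(R); (3) the map ρ_{R,min} : min(R) → min(Z(R)), 𝔭 ↦ 𝔭 ∩ Z(R), is a well-defined map; (4) the map ρ_{R,min} is a well-defined surjection onto min(Z(R)). -/

import Mathlib

/- Common framework: two-sided ideals, prime ideals, denominator sets and
   left localizations of (possibly noncommutative) rings, described
   axiomatically via their characteristic properties. -/

namespace BavulaMinPrimes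

/-- A subset of a ring is a two-sided ideal. -/
def IsIdealSet {R : Type*} [Ring R] (I : Set R) : Prop :=
  (0 : R) ∈ I ∧ (∀ a ∈ I, ∀ b ∈ I, a + b ∈ I) ∧ (∀ a ∈ I, -a ∈ I) ∧
    ∀ a ∈ I, ∀ r : R, r * a ∈ I ∧ a * r ∈ I

/-- A (two-sided) prime ideal: a proper ideal `P` such that `A * B ⊆ P`
implies `A ⊆ P` or `B ⊆ P` for all ideals `A`, `B`. -/
def IsPrimeIdealSet {R : Type*} [Ring R] (P : Set R) : Prop :=
  IsIdealSet P ∧ P ≠ Set.univ ∧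
    ∀ A B : Set R, IsIdealSet A → IsIdealSet B →
      (∀ a ∈ A, ∀ b ∈ B, a * b ∈ P) → A ⊆ P ∨ B ⊆ P

/-- A completely prime ideal: the factor ring is a domain. -/
def IsCompletelyPrimeIdealSet {R : Type*} [Ring R] (P : Set R) : Prop :=
  IsIdealSet P ∧ P ≠ Set.univ ∧ ∀ a b : R, a * b ∈ P → a ∈ P ∨ b ∈ P

/-- A minimal prime ideal of a ring. -/
def IsMinimalPrimeIdealSet {R : Type*} [Ring R] (P : Set R) : Prop :=
  IsPrimeIdealSet P ∧ ∀ P' : Set R, IsPrimeIdealSet P' → P' ⊆ P → P' = P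

/-- A prime minimal over an ideal `A`. -/
def IsMinimalPrimeOver {R : Type*} [Ring R] (A P : Set R) : Prop :=
  IsPrimeIdealSet P ∧ A ⊆ P ∧
    ∀ P' : Set R, IsPrimeIdealSet P' → A ⊆ P' → P' ⊆ P → P' = P

/-- The set `min(R)` of minimal primes of `R`. -/
def minPrimes (R : Type*) [Ring R] : Set (Set R) := { P | IsMinimalPrimeIdealSet P }

/-- The prime radical: intersection of all prime ideals. -/
def primeRadicalSet (R : Type*) [Ring R] : Set R :=
  { r : R | ∀ P : Set R, IsPrimeIdealSet P → r ∈ P }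

/-- A ring is semiprime if its prime radical is zero. -/
def IsSemiprimeRing (R : Type*) [Ring R] : Prop := primeRadicalSet R = {0}

/-- A ring is prime if its zero ideal is a prime ideal. -/
def IsPrimeRing (R : Type*) [Ring R] : Prop := IsPrimeIdealSet ({0} : Set R)

/-- A multiplicative subset: `1 ∈ S`, `0 ∉ S`, closed under multiplication. -/
def IsMulSet {R : Type*} [Ring R] (S : Set R) : Prop :=
  (1 : R) ∈ S ∧ (0 : R) ∉ S ∧ ∀ s ∈ S, ∀ t ∈ S, s * t ∈ S

/-- The left Ore condition: `S r ∩ R s ≠ ∅`. -/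
def LeftOre {R : Type*} [Ring R] (S : Set R) : Prop :=
  ∀ r : R, ∀ s ∈ S, ∃ s' ∈ S, ∃ r' : R, s' * r = r' * s

/-- The right Ore condition: `r S ∩ s R ≠ ∅`. -/
def RightOre {R : Type*} [Ring R] (S : Set R) : Prop :=
  ∀ r : R, ∀ s ∈ S, ∃ s' ∈ S, ∃ r' : R, r * s' = s * r'

/-- A left denominator set: a left Ore multiplicative set such that
`r s = 0` (with `s ∈ S`) implies `t r = 0` for some `t ∈ S`. -/
def IsLeftDenominatorSet {R : Type*} [Ring R] (S : Set R) : Prop :=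
  IsMulSet S ∧ LeftOre S ∧ ∀ r : R, ∀ s ∈ S, r * s = 0 → ∃ t ∈ S, t * r = 0

/-- A right denominator set. -/
def IsRightDenominatorSet {R : Type*} [Ring R] (S : Set R) : Prop :=
  IsMulSet S ∧ RightOre S ∧ ∀ r : R, ∀ s ∈ S, s * r = 0 → ∃ t ∈ S, r * t = 0

/-- `ass_l(S) = { r | s r = 0 for some s ∈ S }`. -/
def lAss {R : Type*} [Ring R] (S : Set R) : Set R := { r : R | ∃ s ∈ S, s * r = 0 }

/-- `f : R →+* Q` realizes `Q` as the left localization `S⁻¹R`: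
elements of `S` become units, every element of `Q` is a left fraction
`(f s)⁻¹ (f r)`, and the kernel of `f` is `ass_l(S)`.  These properties
characterize `S⁻¹R` up to a unique `R`-isomorphism. -/
structure IsLeftLocalization {R Q : Type*} [Ring R] [Ring Q]
    (S : Set R) (f : R →+* Q) : Prop where
  isUnit : ∀ s ∈ S, IsUnit (f s)
  surj : ∀ q : Q, ∃ s ∈ S, ∃ r : R, f s * q = f r
  ker : ∀ r : R, f r = 0 ↔ r ∈ lAss S

/-- `S⁻¹I = { s⁻¹ a | s ∈ S, a ∈ I }` as a subset of the localization `Q`: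
`q ∈ S⁻¹I` iff `f s * q = f a` for some `s ∈ S`, `a ∈ I`. -/
def locSet {R Q : Type*} [Ring R] [Ring Q] (f : R →+* Q) (S : Set R)
    (I : Set R) : Set Q :=
  { q : Q | ∃ s ∈ S, ∃ a ∈ I, f s * q = f a }

/-- A normal element: `R n = n R`. -/
def IsNormalElement {R : Type*} [Ring R] (n : R) : Prop :=
  (∀ r : R, ∃ r' : R, r * n = n * r') ∧ ∀ r : R, ∃ r' : R, n * r = r' * n

/-- A prime rich ring: every ideal contains a finite product of prime ideals
containing it (the empty product being the whole ring). -/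
def IsPrimeRich (R : Type*) [Ring R] : Prop :=
  ∀ A : Set R, IsIdealSet A →
    ∃ (n : ℕ) (P : Fin n → Set R),
      (∀ i, IsPrimeIdealSet (P i) ∧ A ⊆ P i) ∧
      ∀ x : Fin n → R, (∀ i, x i ∈ P i) → (List.ofFn x).prod ∈ A

/-- An ideal which is finitely generated as a right `R`-module. -/
def IsFGRightIdeal {R : Type*} [Ring R] (I : Set R) : Prop :=
  ∃ (m : ℕ) (g : Fin m → R), (∀ i, g i ∈ I) ∧
    ∀ x ∈ I, ∃ c : Fin m → R, x = ∑ i, g i * c i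

/-!
In a semiprime ring the minimal primes intersect in zero. For a central element `z` the sets
`{b | z * b ∈ 𝔭}` and `{a | a * {b | z * b ∈ 𝔭} ⊆ 𝔭}` are ideals, so `z * r ∈ 𝔭` forces `z ∈ 𝔭` or
`r ∈ 𝔭` for every prime `𝔭`. Hence a central element outside all minimal primes is regular, the
centre is reduced, and each `𝔭 ∩ Z(R)` is prime. Conversely, when `min(R)` is finite every
`𝔭 ∈ min(R)` misses the intersection of the other minimal primes, so it consists of zero
divisors. In the reduced commutative ring `Z(R)` with finitely many minimal primes, a prime is
minimal iff it consists of zero divisors (prime avoidance for one direction), which gives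
(2) ⇔ (3). Surjectivity holds because the contractions of the finitely many minimal primes of
`R` intersect in zero, so one of them lies in any given minimal prime of `Z(R)`.
-/

section Ring
variable {R : Type*} [Ring R]

lemma IsIdealSet.sInter {c : Set (Set R)} (hc : ∀ I ∈ c, IsIdealSet I) : IsIdealSet (⋂₀ c) :=
  ⟨fun I hI => (hc I hI).1,
    fun a ha b hb I hI => (hc I hI).2.1 a (ha I hI) b (hb I hI),
    fun a ha I hI => (hc I hI).2.2.1 a (ha I hI),
    fun a ha r => ⟨fun I hI => ((hc I hI).2.2.2 a (ha I hI) r).1,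
      fun I hI => ((hc I hI).2.2.2 a (ha I hI) r).2⟩⟩

lemma IsPrimeIdealSet.one_notMem {P : Set R} (hP : IsPrimeIdealSet P) : (1 : R) ∉ P :=
  fun h1 => hP.2.1 (Set.eq_univ_of_forall fun r => by simpa using (hP.1.2.2.2 1 h1 r).1)

lemma IsCompletelyPrimeIdealSet.isPrimeIdealSet {P : Set R} (hP : IsCompletelyPrimeIdealSet P) :
    IsPrimeIdealSet P := by
  refine ⟨hP.1, hP.2.1, fun A B _ _ hAB => ?_⟩
  by_cases hAP : A ⊆ P
  · exact Or.inl hAP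
  obtain ⟨a, haA, haP⟩ := Set.not_subset.1 hAP
  exact Or.inr fun b hb => (hP.2.2 a b (hAB a haA b hb)).resolve_left haP

lemma IsPrimeIdealSet.mem_or_mem_of_central_mul {P : Set R} (hP : IsPrimeIdealSet P) {z r : R}
    (hz : z ∈ Subring.center R) (h : z * r ∈ P) : z ∈ P ∨ r ∈ P := by
  obtain ⟨⟨hP0, hPadd, hPneg, hPmul⟩, -, hPprime⟩ := hP
  set B := {b : R | z * b ∈ P}
  have hB : IsIdealSet B := by
    refine ⟨show z * 0 ∈ P by rwa [mul_zero], fun a ha b hb => ?_, fun a ha => ?_,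
      fun a ha s => ⟨?_, ?_⟩⟩
    · simpa [B, mul_add] using hPadd _ ha _ hb
    · simpa [B] using hPneg _ ha
    · show z * (s * a) ∈ P
      rw [← mul_assoc, ← Subring.mem_center_iff.1 hz s, mul_assoc]
      exact (hPmul _ ha s).1
    · show z * (a * s) ∈ P
      rw [← mul_assoc]
      exact (hPmul _ ha s).2
  have hA : IsIdealSet {a : R | ∀ b ∈ B, a * b ∈ P} := by
    refine ⟨fun b _ => by simpa using hP0, fun a ha a' ha' b hb => ?_, fun a ha b hb => ?_,
      fun a ha s => ⟨fun b hb => ?_, fun b hb => ?_⟩⟩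
    · simpa [add_mul] using hPadd _ (ha b hb) _ (ha' b hb)
    · simpa using hPneg _ (ha b hb)
    · simpa [mul_assoc] using (hPmul _ (ha b hb) s).1
    · simpa [mul_assoc] using ha (s * b) (hB.2.2.2 b hb s).1
  rcases hPprime _ B hA hB fun a ha b hb => ha b hb with hAP | hBP
  · exact Or.inl (hAP fun b hb => hb)
  · exact Or.inr (hBP h)

lemma IsPrimeIdealSet.sInter_of_isChain {c : Set (Set R)} (hc : IsChain (· ⊆ ·) c)
    (hne : c.Nonempty) (hp : ∀ P ∈ c, IsPrimeIdealSet P) : IsPrimeIdealSet (⋂₀ c) := by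
  obtain ⟨P₀, hP₀⟩ := hne
  refine ⟨IsIdealSet.sInter fun P hP => (hp P hP).1,
    fun h => (hp P₀ hP₀).one_notMem (Set.sInter_subset_of_mem hP₀ (h ▸ trivial)), ?_⟩
  intro A B hA hB hAB
  by_cases hAc : A ⊆ ⋂₀ c
  · exact Or.inl hAc
  obtain ⟨P₁, hP₁, hAP₁⟩ : ∃ P₁ ∈ c, ¬A ⊆ P₁ := by simpa [Set.subset_sInter_iff] using hAc
  have hBP : ∀ P ∈ c, ¬A ⊆ P → B ⊆ P := fun P hP hAP =>
    ((hp P hP).2.2 A B hA hB fun a ha b hb =>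
      Set.sInter_subset_of_mem hP (hAB a ha b hb)).resolve_left hAP
  refine Or.inr (Set.subset_sInter fun P hP => ?_)
  rcases hc.total hP hP₁ with h | h
  · exact hBP P hP fun hAP => hAP₁ (hAP.trans h)
  · exact (hBP P₁ hP₁ hAP₁).trans h

lemma IsPrimeIdealSet.exists_minPrimes_subset {P : Set R} (hP : IsPrimeIdealSet P) :
    ∃ p ∈ minPrimes R, p ⊆ P := by
  obtain ⟨m, hmP, hm⟩ := zorn_superset_nonempty {Q | IsPrimeIdealSet Q}
    (fun c hcS hc hne => ⟨⋂₀ c, IsPrimeIdealSet.sInter_of_isChain hc hne hcS,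
      fun _ => Set.sInter_subset_of_mem⟩) P hP
  exact ⟨m, ⟨hm.prop, fun _ hP' hP'm => hm.eq_of_subset hP' hP'm⟩, hmP⟩

lemma IsPrimeIdealSet.exists_subset_of_sInter_subset {F : Set (Set R)} (hF : F.Finite)
    (hFI : ∀ I ∈ F, IsIdealSet I) {P : Set R} (hP : IsPrimeIdealSet P) (h : ⋂₀ F ⊆ P) :
    ∃ I ∈ F, I ⊆ P := by
  induction F, hF using Set.Finite.induction_on with
  | empty => exact absurd (h (by simp)) hP.one_notMem
  | @insert A s _ _ ih =>
    have hA := hFI A (Set.mem_insert A s)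
    have hs : ∀ I ∈ s, IsIdealSet I := fun I hI => hFI I (Set.mem_insert_of_mem A hI)
    have hprod : ∀ a ∈ A, ∀ b ∈ ⋂₀ s, a * b ∈ P := fun a ha b hb =>
      h (by rw [Set.sInter_insert]
            exact ⟨(hA.2.2.2 a ha b).2, ((IsIdealSet.sInter hs).2.2.2 b hb a).1⟩)
    rcases hP.2.2 A _ hA (IsIdealSet.sInter hs) hprod with hAP | hsP
    · exact ⟨A, Set.mem_insert A s, hAP⟩
    · obtain ⟨I, hI, hIP⟩ := ih hs hsP
      exact ⟨I, Set.mem_insert_of_mem A hI, hIP⟩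

lemma sInter_minPrimes_diff_singleton_not_subset (hfin : (minPrimes R).Finite) {p : Set R}
    (hp : p ∈ minPrimes R) : ¬⋂₀ (minPrimes R \ {p}) ⊆ p := by
  intro h
  obtain ⟨p', ⟨hp', hne⟩, hp'p⟩ :=
    hp.1.exists_subset_of_sInter_subset hfin.sdiff (fun I hI => hI.1.1.1) h
  exact hne (hp.2 p' hp'.1 hp'p)

lemma IsSemiprimeRing.eq_zero_of_forall_mem_minPrimes (hR : IsSemiprimeRing R) {r : R}
    (h : ∀ p ∈ minPrimes R, r ∈ p) : r = 0 := by
  have hr : r ∈ primeRadicalSet R := fun P hP =>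
    let ⟨p, hp, hpP⟩ := hP.exists_minPrimes_subset
    hpP (h p hp)
  rwa [hR] at hr

lemma IsSemiprimeRing.isRegular_of_forall_notMem_minPrimes (hR : IsSemiprimeRing R) {z : R}
    (hz : z ∈ Subring.center R) (h : ∀ p ∈ minPrimes R, z ∉ p) : IsRegular z := by
  have hcomm : ∀ b, Commute z b := fun b => (Subring.mem_center_iff.1 hz b).symm
  refine (Commute.isRegular_iff hcomm).2 (isLeftRegular_iff_right_eq_zero_of_mul.2 fun r hzr => ?_)
  refine hR.eq_zero_of_forall_mem_minPrimes fun p hp => ?_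
  have hzr' : z * r ∈ p := hzr ▸ hp.1.1.1
  exact (hp.1.mem_or_mem_of_central_mul hz hzr').resolve_left (h p hp)

lemma IsSemiprimeRing.notMem_minPrimes_of_isRightRegular (hR : IsSemiprimeRing R)
    (hfin : (minPrimes R).Finite) {p : Set R} (hp : p ∈ minPrimes R) {z : R}
    (hz : IsRightRegular z) : z ∉ p := by
  intro hzp
  obtain ⟨a, ha, hap⟩ := Set.not_subset.1 (sInter_minPrimes_diff_singleton_not_subset hfin hp)
  have haz : a * z = 0 := hR.eq_zero_of_forall_mem_minPrimes fun p' hp' => by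
    by_cases hpp : p' = p
    · subst hpp
      exact (hp'.1.1.2.2.2 z hzp a).1
    · exact (hp'.1.1.2.2.2 a (ha p' ⟨hp', hpp⟩) z).2
  rw [isRightRegular_iff_left_eq_zero_of_mul.1 hz a haz] at hap
  exact hap hp.1.1.1

lemma IsPrimeIdealSet.preimage_center {P : Set R} (hP : IsPrimeIdealSet P) :
    IsPrimeIdealSet {z : Subring.center R | (z : R) ∈ P} := by
  obtain ⟨hP0, hPadd, hPneg, hPmul⟩ := hP.1
  refine IsCompletelyPrimeIdealSet.isPrimeIdealSet
    ⟨⟨hP0, fun a ha b hb => hPadd _ ha _ hb, fun a ha => hPneg _ ha, fun a ha r => hPmul _ ha r⟩,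
      fun h => hP.one_notMem ?_, fun a b hab => hP.mem_or_mem_of_central_mul a.2 hab⟩
  exact (h ▸ Set.mem_univ _ : (1 : Subring.center R) ∈ _)

end Ring

section CommRing
variable {S : Type*} [CommRing S]

def IsIdealSet.toIdeal {q : Set S} (hq : IsIdealSet q) : Ideal S where
  carrier := q
  add_mem' ha hb := hq.2.1 _ ha _ hb
  zero_mem' := hq.1
  smul_mem' c _ hx := (hq.2.2.2 _ hx c).1

lemma isIdealSet_coe (I : Ideal S) : IsIdealSet (I : Set S) :=
  ⟨I.zero_mem, fun _ ha _ hb => I.add_mem ha hb, fun _ ha => I.neg_mem ha,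
    fun _ ha r => ⟨I.mul_mem_left r ha, I.mul_mem_right r ha⟩⟩

lemma isPrimeIdealSet_coe_iff (I : Ideal S) : IsPrimeIdealSet (I : Set S) ↔ I.IsPrime := by
  refine ⟨fun hI => ⟨fun htop => hI.2.1 (by simp [htop]), fun hab => ?_⟩, fun hI => ?_⟩
  · exact hI.mem_or_mem_of_central_mul (Subring.mem_center_iff.2 fun g => mul_comm g _) hab
  · refine IsCompletelyPrimeIdealSet.isPrimeIdealSet
      ⟨isIdealSet_coe I, fun h => hI.ne_top ?_, fun _ _ => hI.mem_or_mem⟩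
    exact SetLike.coe_injective (h.trans Submodule.top_coe.symm)

lemma isMinimalPrimeIdealSet_coe_iff (I : Ideal S) :
    IsMinimalPrimeIdealSet (I : Set S) ↔ I ∈ minimalPrimes S := by
  rw [minimalPrimes_eq_minimals, Set.mem_ofPred_eq, IsMinimalPrimeIdealSet,
    isPrimeIdealSet_coe_iff]
  refine and_congr_right fun _ => ⟨fun h J hJ hJI => ?_, fun h Q hQ hQI => ?_⟩
  · exact (SetLike.coe_injective (h J ((isPrimeIdealSet_coe_iff J).2 hJ) hJI)).ge
  · exact hQI.antisymm (h (y := hQ.1.toIdeal) ((isPrimeIdealSet_coe_iff _).1 hQ) hQI)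

lemma Ideal.exists_mem_minimalPrimes_notMem [IsReduced S] {x : S} (hx : x ≠ 0) :
    ∃ J ∈ minimalPrimes S, x ∉ J := by
  by_contra! h
  have hx' : x ∈ sInf (minimalPrimes S) := Submodule.mem_sInf.2 h
  rw [minimalPrimes, Ideal.sInf_minimalPrimes] at hx'
  obtain ⟨n, hn⟩ := hx'
  exact hx (IsReduced.eq_zero x ⟨n, by simpa using hn⟩)

lemma Ideal.mem_minimalPrimes_of_disjoint_nonZeroDivisors [IsReduced S]
    (hfin : (minimalPrimes S).Finite) {I : Ideal S} (hI : I.IsPrime)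
    (h : Disjoint (I : Set S) (nonZeroDivisors S)) : I ∈ minimalPrimes S := by
  have hcover : (I : Set S) ⊆ ⋃ J ∈ minimalPrimes S, (J : Set S) := by
    intro x hx
    obtain ⟨y, hyx, hy⟩ : ∃ y, y * x = 0 ∧ y ≠ 0 := by
      simpa [mem_nonZeroDivisors_iff_right] using Set.disjoint_left.1 h hx
    obtain ⟨J, hJ, hyJ⟩ := Ideal.exists_mem_minimalPrimes_notMem hy
    have hyxJ : y * x ∈ J := by rw [hyx]; exact J.zero_mem
    exact Set.mem_biUnion hJ (((hJ.isPrime).mem_or_mem hyxJ).resolve_left hyJ)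
  obtain ⟨J, hJ, hIJ⟩ := (Ideal.subset_union_prime_finite hfin ⊥ ⊥
    fun J hJ _ _ => hJ.isPrime).1 hcover
  obtain rfl : J = I := le_antisymm (hJ.2 ⟨hI, bot_le⟩ hIJ) hIJ
  exact hJ

lemma IsMinimalPrimeIdealSet.disjoint_nonZeroDivisors {q : Set S}
    (hq : IsMinimalPrimeIdealSet q) : Disjoint q (nonZeroDivisors S) :=
  Ideal.disjoint_nonZeroDivisors_of_mem_minimalPrimes
    ((isMinimalPrimeIdealSet_coe_iff hq.1.1.toIdeal).1 hq)

lemma IsPrimeIdealSet.isMinimalPrimeIdealSet_of_disjoint [IsReduced S]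
    (hfin : {q : Set S | IsMinimalPrimeIdealSet q}.Finite) {q : Set S} (hq : IsPrimeIdealSet q)
    (h : Disjoint q (nonZeroDivisors S)) : IsMinimalPrimeIdealSet q := by
  have hfin' : (minimalPrimes S).Finite :=
    (hfin.preimage SetLike.coe_injective.injOn).subset
      fun J hJ => (isMinimalPrimeIdealSet_coe_iff J).2 hJ
  exact (isMinimalPrimeIdealSet_coe_iff hq.1.toIdeal).2
    (Ideal.mem_minimalPrimes_of_disjoint_nonZeroDivisors hfin'
      ((isPrimeIdealSet_coe_iff hq.1.toIdeal).1 hq) h)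

end CommRing

section Center
variable {R : Type*} [Ring R]

lemma IsSemiprimeRing.isReduced_center (hR : IsSemiprimeRing R) :
    IsReduced (Subring.center R) := by
  refine (isReduced_iff_pow_one_lt 2 one_lt_two).2 fun z hz => Subtype.ext ?_
  have hzz : (z : R) * z ∈ primeRadicalSet R := by
    have : (z : R) * z = 0 := by simpa [sq] using congrArg Subtype.val hz
    rw [hR, this]
    rfl
  have hrad : (z : R) ∈ primeRadicalSet R := fun P hP =>
    (hP.mem_or_mem_of_central_mul z.2 (hzz P hP)).elim id id
  rw [hR] at hrad
  exact hrad

lemma IsSemiprimeRing.exists_minPrimes_preimage_center_eq (hR : IsSemiprimeRing R)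
    (hfin : (minPrimes R).Finite) {q : Set (Subring.center R)}
    (hq : IsMinimalPrimeIdealSet q) :
    ∃ p ∈ minPrimes R, {z : Subring.center R | (z : R) ∈ p} = q := by
  set F := (fun p : Set R => {z : Subring.center R | (z : R) ∈ p}) '' minPrimes R
  have hFq : ⋂₀ F ⊆ q := fun z hz => by
    have hz0 : z = 0 := Subtype.ext <|
      hR.eq_zero_of_forall_mem_minPrimes fun p hp => hz _ ⟨p, hp, rfl⟩
    rw [hz0]
    exact hq.1.1.1
  obtain ⟨_, ⟨p, hp, rfl⟩, hpq⟩ := hq.1.exists_subset_of_sInter_subset (hfin.image _)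
    (by rintro _ ⟨p, hp, rfl⟩; exact hp.1.preimage_center.1) hFq
  exact ⟨p, hp, hq.2 _ hp.1.preimage_center hpq⟩

end Center

/-- Let `R` be a semiprime ring such that both `R` and its
centre `Z(R)` have finitely many minimal primes.  TFAE:
(1) `C_{Z(R)} ⊆ C_R`; (2) `C_{Z(R)} ∩ 𝔭 = ∅` for all `𝔭 ∈ min(R)`;
(3) the map `ρ_{R,min} : min(R) → min(Z(R))`, `𝔭 ↦ 𝔭 ∩ Z(R)`, is well
defined; (4) `ρ_{R,min}` is a well-defined surjection onto `min(Z(R))`. -/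
theorem statement12 {R : Type*} [Ring R]
    (hR : IsSemiprimeRing R) (hfin : (minPrimes R).Finite)
    (hfinZ : {q : Set (Subring.center R) | IsMinimalPrimeIdealSet q}.Finite) :
    ((∀ z : Subring.center R,
        z ∈ nonZeroDivisors (Subring.center R) → IsRegular (z : R)) ↔
      ∀ p ∈ minPrimes R, ∀ z : Subring.center R,
        z ∈ nonZeroDivisors (Subring.center R) → (z : R) ∉ p) ∧
    ((∀ z : Subring.center R,
        z ∈ nonZeroDivisors (Subring.center R) → IsRegular (z : R)) ↔
      ∀ p ∈ minPrimes R,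
        IsMinimalPrimeIdealSet {z : Subring.center R | (z : R) ∈ p}) ∧
    ((∀ z : Subring.center R,
        z ∈ nonZeroDivisors (Subring.center R) → IsRegular (z : R)) ↔
      ((∀ p ∈ minPrimes R,
          IsMinimalPrimeIdealSet {z : Subring.center R | (z : R) ∈ p}) ∧
        ∀ q : Set (Subring.center R), IsMinimalPrimeIdealSet q →
          ∃ p ∈ minPrimes R, {z : Subring.center R | (z : R) ∈ p} = q)) := by
  have := hR.isReduced_center
  have h12 : (∀ z : Subring.center R,
        z ∈ nonZeroDivisors (Subring.center R) → IsRegular (z : R)) ↔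
      ∀ p ∈ minPrimes R, ∀ z : Subring.center R,
        z ∈ nonZeroDivisors (Subring.center R) → (z : R) ∉ p :=
    ⟨fun h1 p hp z hz => hR.notMem_minPrimes_of_isRightRegular hfin hp (h1 z hz).right,
      fun h2 z hz => hR.isRegular_of_forall_notMem_minPrimes z.2 fun p hp => h2 p hp z hz⟩
  have h23 : (∀ p ∈ minPrimes R, ∀ z : Subring.center R,
        z ∈ nonZeroDivisors (Subring.center R) → (z : R) ∉ p) ↔
      ∀ p ∈ minPrimes R, IsMinimalPrimeIdealSet {z : Subring.center R | (z : R) ∈ p} :=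
    forall₂_congr fun _ hp => Set.disjoint_right.symm.trans
      ⟨hp.1.preimage_center.isMinimalPrimeIdealSet_of_disjoint hfinZ,
        IsMinimalPrimeIdealSet.disjoint_nonZeroDivisors⟩
  exact ⟨h12, h12.trans h23, (h12.trans h23).trans
    ⟨fun h3 => ⟨h3, fun q hq => hR.exists_minPrimes_preimage_center_eq hfin hq⟩, And.left⟩⟩

end BavulaMinPrimes
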